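/- (Besicovitch) Let E ⊆ ℂ be a compact set with finite one-dimensional Hausdorff measure, H¹(E) < ∞. Then E is A-removable. -/

import Mathlib

/-!
By Morera's theorem it suffices that the integral of `f` over the boundary of every rectangle `R`
vanishes. Given `ε > 0`, cover `K` by finitely many discs `B(cⱼ, rⱼ)` with `∑ rⱼ < H¹(K) + 1` and
all `rⱼ` so small that `f` oscillates by at most `ε` over distance `rⱼ`. Quadrisect `R` until the
pieces either miss `K`, where Cauchy–Goursat gives `0`, or meet a disc `B(cⱼ, rⱼ)` and have side
between `rⱼ / 4` and `rⱼ / 2`; such a piece has boundary integral at most `ε` times its perimeter,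
and its perimeter is bounded, up to the aspect ratio of `R`, by its mass for the measure
`∑ⱼ rⱼ⁻¹ · Lebesgue|B(cⱼ, 2rⱼ)|`. That measure has total mass `4π ∑ rⱼ`, so the boundary integral
over `R` is `O(ε)`. Liouville's theorem finishes the proof.
-/

open MeasureTheory Filter

/-- A compact set `E ⊆ ℂ` is `A`-removable if every continuous function `f : ℂ → ℂ` that is
holomorphic on `ℂ \ E` and has a finite limit at infinity is constant. -/
def ARemovable (E : Set ℂ) : Prop :=
  ∀ f : ℂ → ℂ, Continuous f → DifferentiableOn ℂ f Eᶜ →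
    (∃ L : ℂ, Tendsto f (cocompact ℂ) (nhds L)) → ∀ z w : ℂ, f z = f w

open Set Metric Complex intervalIntegral
open scoped Interval ENNReal Real

section RectIntegral

lemma Continuous.intervalIntegrable_horizontal {V : Type*} [NormedAddCommGroup V] {f : ℂ → V}
    (hf : Continuous f) (y a b : ℝ) :
    IntervalIntegrable (fun x : ℝ => f (x + y * I)) volume a b :=
  (hf.comp (by fun_prop)).intervalIntegrable a b

lemma Continuous.intervalIntegrable_vertical {V : Type*} [NormedAddCommGroup V] {f : ℂ → V}
    (hf : Continuous f) (x a b : ℝ) :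
    IntervalIntegrable (fun y : ℝ => f (x + y * I)) volume a b :=
  (hf.comp (by fun_prop)).intervalIntegrable a b

variable {V : Type*} [NormedAddCommGroup V] [NormedSpace ℂ V]

/-- The boundary integral of `[a, b] ×ℂ [c, d]`, in the form of
`Complex.wedgeIntegral_add_wedgeIntegral_eq` for the corners `a + c * I` and `b + d * I`. -/
noncomputable def rectIntegral (f : ℂ → V) (a b c d : ℝ) : V :=
  (∫ x : ℝ in a..b, f (x + c * I)) - (∫ x : ℝ in a..b, f (x + d * I)) +
    I • (∫ y : ℝ in c..d, f (b + y * I)) - I • ∫ y : ℝ in c..d, f (a + y * I)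

lemma rectIntegral_swap_re (f : ℂ → V) (a b c d : ℝ) :
    rectIntegral f b a c d = -rectIntegral f a b c d := by
  simp only [rectIntegral, integral_symm a b]
  abel

lemma rectIntegral_swap_im (f : ℂ → V) (a b c d : ℝ) :
    rectIntegral f a b d c = -rectIntegral f a b c d := by
  simp only [rectIntegral, integral_symm c d, smul_neg]
  abel

lemma rectIntegral_same_re (f : ℂ → V) (a c d : ℝ) : rectIntegral f a a c d = 0 := by
  simp [rectIntegral]

lemma rectIntegral_same_im (f : ℂ → V) (a b c : ℝ) : rectIntegral f a b c c = 0 := by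
  simp [rectIntegral]

variable {f : ℂ → V}

lemma rectIntegral_add_re (hf : Continuous f) (a m b c d : ℝ) :
    rectIntegral f a b c d = rectIntegral f a m c d + rectIntegral f m b c d := by
  simp only [rectIntegral, ← integral_add_adjacent_intervals
    (hf.intervalIntegrable_horizontal c a m) (hf.intervalIntegrable_horizontal c m b),
    ← integral_add_adjacent_intervals
    (hf.intervalIntegrable_horizontal d a m) (hf.intervalIntegrable_horizontal d m b)]
  abel

lemma rectIntegral_add_im (hf : Continuous f) (a b c m d : ℝ) :
    rectIntegral f a b c d = rectIntegral f a b c m + rectIntegral f a b m d := by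
  simp only [rectIntegral, ← integral_add_adjacent_intervals
    (hf.intervalIntegrable_vertical a c m) (hf.intervalIntegrable_vertical a m d),
    ← integral_add_adjacent_intervals
    (hf.intervalIntegrable_vertical b c m) (hf.intervalIntegrable_vertical b m d), smul_add]
  abel

lemma rectIntegral_quadrisect (hf : Continuous f) (a b c d : ℝ) :
    rectIntegral f a b c d =
      rectIntegral f a ((a + b) / 2) c ((c + d) / 2) +
      rectIntegral f ((a + b) / 2) b c ((c + d) / 2) +
      rectIntegral f a ((a + b) / 2) ((c + d) / 2) d +
      rectIntegral f ((a + b) / 2) b ((c + d) / 2) d := by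
  rw [rectIntegral_add_im hf a b c ((c + d) / 2) d, rectIntegral_add_re hf a ((a + b) / 2) b c,
    rectIntegral_add_re hf a ((a + b) / 2) b ((c + d) / 2)]
  abel

lemma rectIntegral_eq_zero_of_differentiableOn [CompleteSpace V] {a b c d : ℝ}
    (hf : DifferentiableOn ℂ f ([[a, b]] ×ℂ [[c, d]])) : rectIntegral f a b c d = 0 :=
  integral_boundary_rect_eq_zero_of_differentiableOn f ⟨a, c⟩ ⟨b, d⟩ hf

lemma rectIntegral_sub_const [CompleteSpace V] (hf : Continuous f) (v : V) (a b c d : ℝ) :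
    rectIntegral (fun z => f z - v) a b c d = rectIntegral f a b c d := by
  have hv : rectIntegral (fun _ => v) a b c d = 0 :=
    rectIntegral_eq_zero_of_differentiableOn (differentiableOn_const v)
  rw [← sub_zero (rectIntegral f a b c d), ← hv]
  simp only [rectIntegral,
    integral_sub (hf.intervalIntegrable_horizontal _ a b) intervalIntegrable_const,
    integral_sub (hf.intervalIntegrable_vertical _ c d) intervalIntegrable_const, smul_sub]
  abel

lemma norm_rectIntegral_le [CompleteSpace V] (hf : Continuous f) {a b c d C : ℝ} (hab : a ≤ b)
    (hcd : c ≤ d) (v : V) (hC : ∀ z ∈ Icc a b ×ℂ Icc c d, ‖f z - v‖ ≤ C) :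
    ‖rectIntegral f a b c d‖ ≤ 2 * ((b - a) + (d - c)) * C := by
  have horiz : ∀ y ∈ Icc c d, ‖∫ x : ℝ in a..b, f (x + y * I) - v‖ ≤ C * (b - a) := by
    intro y hy
    rw [← abs_of_nonneg (sub_nonneg.2 hab)]
    exact norm_integral_le_of_norm_le_const
      fun x hx => hC (x + y * I)
        ⟨by simpa using Ioc_subset_Icc_self ((uIoc_of_le hab) ▸ hx), by simpa using hy⟩
  have vert : ∀ x ∈ Icc a b, ‖∫ y : ℝ in c..d, f (x + y * I) - v‖ ≤ C * (d - c) := by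
    intro x hx
    rw [← abs_of_nonneg (sub_nonneg.2 hcd)]
    exact norm_integral_le_of_norm_le_const
      fun y hy => hC (x + y * I)
        ⟨by simpa using hx, by simpa using Ioc_subset_Icc_self ((uIoc_of_le hcd) ▸ hy)⟩
  rw [← rectIntegral_sub_const hf v, rectIntegral]
  have h₁ := horiz c ⟨le_rfl, hcd⟩
  have h₂ := horiz d ⟨hcd, le_rfl⟩
  have h₃ := vert b ⟨hab, le_rfl⟩
  have h₄ := vert a ⟨le_rfl, hab⟩
  calc _ ≤ _ := norm_sub_le_of_le
        (norm_add_le_of_le (norm_sub_le _ _) (norm_smul_le _ _)) (norm_smul_le _ _)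
    _ ≤ C * (b - a) + C * (b - a) + 1 * (C * (d - c)) + 1 * (C * (d - c)) := by
        rw [norm_I]; gcongr
    _ = 2 * ((b - a) + (d - c)) * C := by ring

end RectIntegral

lemma union_reProdIm (s₁ s₂ t : Set ℝ) : (s₁ ∪ s₂) ×ℂ t = s₁ ×ℂ t ∪ s₂ ×ℂ t :=
  union_inter_distrib_right _ _ _

lemma reProdIm_union (s t₁ t₂ : Set ℝ) : s ×ℂ (t₁ ∪ t₂) = s ×ℂ t₁ ∪ s ×ℂ t₂ :=
  inter_union_distrib_left _ _ _

lemma reProdIm_mono {s₁ s₂ t₁ t₂ : Set ℝ} (hs : s₁ ⊆ s₂) (ht : t₁ ⊆ t₂) :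
    s₁ ×ℂ t₁ ⊆ s₂ ×ℂ t₂ :=
  inter_subset_inter (preimage_mono hs) (preimage_mono ht)

lemma dist_le_of_mem_reProdIm_Icc {a b c d : ℝ} {z w : ℂ} (hz : z ∈ Icc a b ×ℂ Icc c d)
    (hw : w ∈ Icc a b ×ℂ Icc c d) : dist z w ≤ (b - a) + (d - c) := by
  calc dist z w ≤ |z.re - w.re| + |z.im - w.im| := by
        simpa only [dist_eq, sub_re, sub_im] using norm_le_abs_re_add_abs_im (z - w)
    _ ≤ (b - a) + (d - c) := add_le_add (Real.dist_le_of_mem_Icc hz.1 hw.1)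
        (Real.dist_le_of_mem_Icc hz.2 hw.2)

lemma MeasurableSet.reProdIm {s t : Set ℝ} (hs : MeasurableSet s) (ht : MeasurableSet t) :
    MeasurableSet (s ×ℂ t) :=
  (measurable_re hs).inter (measurable_im ht)

lemma volume_reProdIm (s t : Set ℝ) : volume (s ×ℂ t) = volume s * volume t := by
  calc volume (s ×ℂ t) = volume (measurableEquivRealProd ⁻¹' (s ×ˢ t)) := rfl
    _ = volume s * volume t := by
      rw [volume_preserving_equiv_real_prod.measure_preimage_equiv, Measure.volume_eq_prod,
        Measure.prod_prod]

lemma volume_real_reProdIm_Ioc {a b c d : ℝ} (hab : a ≤ b) (hcd : c ≤ d) :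
    volume.real (Ioc a b ×ℂ Ioc c d) = (b - a) * (d - c) := by
  simp [measureReal_def, volume_reProdIm, hab, hcd]

section MeasureSplit

variable (μ : Measure ℂ) [IsFiniteMeasure μ]

lemma measureReal_reProdIm_Ioc_add_re {a m b : ℝ} (h₁ : a ≤ m) (h₂ : m ≤ b) {t : Set ℝ}
    (ht : MeasurableSet t) :
    μ.real (Ioc a b ×ℂ t) = μ.real (Ioc a m ×ℂ t) + μ.real (Ioc m b ×ℂ t) := by
  rw [← Ioc_union_Ioc_eq_Ioc h₁ h₂, union_reProdIm]
  exact measureReal_union (((Ioc_disjoint_Ioc_of_le le_rfl).preimage re).mono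
    inter_subset_left inter_subset_left) (measurableSet_Ioc.reProdIm ht)

lemma measureReal_reProdIm_Ioc_add_im {c m d : ℝ} (h₁ : c ≤ m) (h₂ : m ≤ d) {s : Set ℝ}
    (hs : MeasurableSet s) :
    μ.real (s ×ℂ Ioc c d) = μ.real (s ×ℂ Ioc c m) + μ.real (s ×ℂ Ioc m d) := by
  rw [← Ioc_union_Ioc_eq_Ioc h₁ h₂, reProdIm_union]
  exact measureReal_union (((Ioc_disjoint_Ioc_of_le le_rfl).preimage im).mono
    inter_subset_right inter_subset_right) (hs.reProdIm measurableSet_Ioc)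

lemma measureReal_reProdIm_Ioc_quadrisect {a b c d : ℝ} (hab : a ≤ b) (hcd : c ≤ d) :
    μ.real (Ioc a b ×ℂ Ioc c d) =
      μ.real (Ioc a ((a + b) / 2) ×ℂ Ioc c ((c + d) / 2)) +
      μ.real (Ioc ((a + b) / 2) b ×ℂ Ioc c ((c + d) / 2)) +
      μ.real (Ioc a ((a + b) / 2) ×ℂ Ioc ((c + d) / 2) d) +
      μ.real (Ioc ((a + b) / 2) b ×ℂ Ioc ((c + d) / 2) d) := by
  rw [measureReal_reProdIm_Ioc_add_im μ (by linarith : c ≤ (c + d) / 2)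
      (by linarith : (c + d) / 2 ≤ d) measurableSet_Ioc,
    measureReal_reProdIm_Ioc_add_re μ (by linarith : a ≤ (a + b) / 2)
      (by linarith : (a + b) / 2 ≤ b) measurableSet_Ioc,
    measureReal_reProdIm_Ioc_add_re μ (by linarith : a ≤ (a + b) / 2)
      (by linarith : (a + b) / 2 ≤ b) measurableSet_Ioc]
  ring

end MeasureSplit

structure FiniteBallCover {X : Type*} [PseudoMetricSpace X] (K : Set X) where
  index : Finset ℕ
  center : ℕ → X
  radius : ℕ → ℝ
  radius_pos : ∀ j ∈ index, 0 < radius j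
  subset_iUnion_ball : K ⊆ ⋃ j ∈ index, ball (center j) (radius j)

namespace FiniteBallCover

lemma exists_pos_le_radius {X : Type*} [PseudoMetricSpace X] {K : Set X}
    (𝒞 : FiniteBallCover K) : ∃ ρ > 0, ∀ j ∈ 𝒞.index, ρ ≤ 𝒞.radius j := by
  rcases 𝒞.index.eq_empty_or_nonempty with h | h
  · exact ⟨1, one_pos, by simp [h]⟩
  · obtain ⟨j, hj, hmin⟩ := 𝒞.index.exists_min_image 𝒞.radius h
    exact ⟨𝒞.radius j, 𝒞.radius_pos j hj, hmin⟩

end FiniteBallCover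

section HausdorffCover

variable {X : Type*} [MetricSpace X] [MeasurableSpace X] [BorelSpace X]

lemma exists_cover_ediam_le_tsum_lt_of_hausdorffMeasure_one_lt {K : Set X} {L : ℝ≥0∞}
    (hL : μH[1] K < L) {r : ℝ≥0∞} (hr : 0 < r) :
    ∃ t : ℕ → Set X, K ⊆ ⋃ n, t n ∧ (∀ n, ediam (t n) ≤ r) ∧ ∑' n, ediam (t n) < L := by
  have h : ⨅ (t : ℕ → Set X) (_ : K ⊆ ⋃ n, t n) (_ : ∀ n, ediam (t n) ≤ r),
      ∑' n, ⨆ _ : (t n).Nonempty, ediam (t n) ^ (1 : ℝ) < L := by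
    refine lt_of_le_of_lt ?_ hL
    rw [Measure.hausdorffMeasure_apply]
    exact le_iSup₂ (f := fun r (_ : 0 < r) => ⨅ (t : ℕ → Set X) (_ : K ⊆ ⋃ n, t n)
      (_ : ∀ n, ediam (t n) ≤ r), ∑' n, ⨆ _ : (t n).Nonempty, ediam (t n) ^ (1 : ℝ)) r hr
  simp only [iInf_lt_iff] at h
  obtain ⟨t, hcov, hdiam, hsum⟩ := h
  refine ⟨t, hcov, hdiam, lt_of_le_of_lt (ENNReal.tsum_le_tsum fun n => ?_) hsum⟩
  rcases (t n).eq_empty_or_nonempty with h | h <;> simp [h]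

theorem exists_finiteBallCover_of_hausdorffMeasure_one_lt [Nonempty X] {K : Set X}
    (hK : IsCompact K) {M : ℝ} (hM : μH[1] K < ENNReal.ofReal M) {δ : ℝ} (hδ : 0 < δ) :
    ∃ 𝒞 : FiniteBallCover K, (∀ j ∈ 𝒞.index, 𝒞.radius j ≤ δ) ∧
      ∑ j ∈ 𝒞.index, 𝒞.radius j < M := by
  obtain ⟨t, hcov, hdiam, hsum⟩ := exists_cover_ediam_le_tsum_lt_of_hausdorffMeasure_one_lt hM
    (ENNReal.ofReal_pos.2 (half_pos hδ))
  set S := ∑' n, ediam (t n)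
  -- `η` makes the radii exceed the diameters, at a total cost below both `M - S` and `δ / 2`.
  obtain ⟨η, hη, hηsum⟩ := ENNReal.exists_pos_sum_of_countable
    (lt_min (tsub_pos_of_lt hsum) (ENNReal.ofReal_pos.2 (half_pos hδ))).ne' ℕ
  have hdiam_ne_top n : ediam (t n) ≠ ∞ := ne_top_of_le_ne_top ENNReal.ofReal_ne_top (hdiam n)
  set R : ℕ → ℝ≥0∞ := fun n => ediam (t n) + η n
  have hR_ne_top n : R n ≠ ∞ := ENNReal.add_ne_top.2 ⟨hdiam_ne_top n, ENNReal.coe_ne_top⟩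
  have hcenter n : ∃ q : X, (t n).Nonempty → q ∈ t n :=
    (t n).eq_empty_or_nonempty.elim
      (fun h => ⟨Classical.arbitrary X, fun h' => (h'.ne_empty h).elim⟩)
      fun ⟨q, hq⟩ => ⟨q, fun _ => hq⟩
  choose p hp using hcenter
  have hsub n : t n ⊆ ball (p n) (R n).toReal := fun x hx => by
    rw [← eball_ofReal, ENNReal.ofReal_toReal (hR_ne_top n)]
    exact (edist_le_ediam_of_mem hx (hp n ⟨x, hx⟩)).trans_lt
      (ENNReal.lt_add_right (hdiam_ne_top n) (by simpa using (hη n).ne'))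
  obtain ⟨J, hJ⟩ := hK.elim_finite_subcover (fun n => ball (p n) (R n).toReal)
    (fun _ => isOpen_ball) (hcov.trans (iUnion_mono hsub))
  refine ⟨⟨J, p, fun n => (R n).toReal, fun n _ => ENNReal.toReal_pos
    (by simp [R, (hη n).ne']) (hR_ne_top n), hJ⟩, fun n _ => ?_, ?_⟩
  · have hηn : (η n : ℝ≥0∞) ≤ ENNReal.ofReal (δ / 2) :=
      (ENNReal.le_tsum n).trans (hηsum.le.trans (min_le_right _ _))
    calc (R n).toReal ≤ (ENNReal.ofReal (δ / 2) + ENNReal.ofReal (δ / 2)).toReal :=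
          ENNReal.toReal_mono (by simp) (add_le_add (hdiam n) hηn)
      _ = δ := by rw [← ENNReal.ofReal_add (by positivity) (by positivity),
          ENNReal.toReal_ofReal (by positivity), add_halves]
  · have htotal : ∑ j ∈ J, R j < ENNReal.ofReal M :=
      calc ∑ j ∈ J, R j ≤ ∑' n, R n := ENNReal.sum_le_tsum J
        _ = S + ∑' n, (η n : ℝ≥0∞) := ENNReal.tsum_add
        _ < S + (ENNReal.ofReal M - S) :=
          ENNReal.add_lt_add_left (ne_top_of_lt hsum) (hηsum.trans_le (min_le_left _ _))
        _ = ENNReal.ofReal M := add_tsub_cancel_of_le hsum.le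
    rw [← ENNReal.toReal_sum fun j _ => hR_ne_top j]
    exact ENNReal.toReal_lt_of_lt_ofReal htotal

end HausdorffCover

namespace FiniteBallCover

variable {K : Set ℂ} (𝒞 : FiniteBallCover K)

/-- Replaces counting the rectangles at which the subdivision stops: being a measure, it is
additive over the subdivision. -/
noncomputable def weight : Measure ℂ :=
  ∑ j ∈ 𝒞.index, (ENNReal.ofReal (𝒞.radius j))⁻¹ •
    volume.restrict (ball (𝒞.center j) (2 * 𝒞.radius j))

lemma weight_univ : 𝒞.weight univ = ENNReal.ofReal (4 * π * ∑ j ∈ 𝒞.index, 𝒞.radius j) := by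
  rw [Finset.mul_sum, ENNReal.ofReal_sum_of_nonneg
    fun j hj => by have := 𝒞.radius_pos j hj; positivity]
  simp only [weight, Measure.coe_finsetSum, Finset.sum_apply, Measure.smul_apply,
    Measure.restrict_apply_univ, Complex.volume_ball, smul_eq_mul]
  refine Finset.sum_congr rfl fun j hj => ?_
  have hr := 𝒞.radius_pos j hj
  rw [← ENNReal.ofReal_inv_of_pos hr, ← ENNReal.ofReal_pow (by positivity),
    ← ENNReal.ofReal_coe_nnreal, NNReal.coe_real_pi, ← ENNReal.ofReal_mul (by positivity),
    ← ENNReal.ofReal_mul (by positivity)]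
  congr 1
  field_simp
  ring

instance : IsFiniteMeasure 𝒞.weight :=
  ⟨by rw [weight_univ]; exact ENNReal.ofReal_lt_top⟩

lemma measureReal_weight_le (s : Set ℂ) :
    𝒞.weight.real s ≤ 4 * π * ∑ j ∈ 𝒞.index, 𝒞.radius j := by
  refine (measureReal_mono (subset_univ s)).trans_eq ?_
  rw [measureReal_def, weight_univ, ENNReal.toReal_ofReal]
  exact mul_nonneg (by positivity) (Finset.sum_nonneg fun j hj => (𝒞.radius_pos j hj).le)

lemma volume_real_le_radius_mul_weight {j : ℕ} (hj : j ∈ 𝒞.index) {s : Set ℂ}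
    (hs : s ⊆ ball (𝒞.center j) (2 * 𝒞.radius j)) :
    volume.real s ≤ 𝒞.radius j * 𝒞.weight.real s := by
  have hr := 𝒞.radius_pos j hj
  have hterm : (ENNReal.ofReal (𝒞.radius j))⁻¹ * volume s ≤ 𝒞.weight s := by
    have := Finset.single_le_sum (f := fun i => ((ENNReal.ofReal (𝒞.radius i))⁻¹ •
      volume.restrict (ball (𝒞.center i) (2 * 𝒞.radius i))) s) (fun _ _ => bot_le) hj
    simpa [weight, Measure.coe_finsetSum, Measure.restrict_eq_self _ hs] using this
  rw [ENNReal.inv_mul_le_iff (by simpa using hr) ENNReal.ofReal_ne_top] at hterm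
  rw [measureReal_def, measureReal_def, ← ENNReal.toReal_ofReal hr.le, ← ENNReal.toReal_mul]
  exact ENNReal.toReal_mono (ENNReal.mul_ne_top ENNReal.ofReal_ne_top (measure_ne_top _ _)) hterm

def Stops (a b c d : ℝ) : Prop :=
  ∃ j ∈ 𝒞.index, (Icc a b ×ℂ Icc c d ∩ ball (𝒞.center j) (𝒞.radius j)).Nonempty ∧
    max (b - a) (d - c) ≤ 𝒞.radius j / 2

/-- The invariant of the subdivision, passed on to the quarters of a rectangle at which it does
not stop. -/
def Admissible (a b c d : ℝ) : Prop :=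
  ∀ j ∈ 𝒞.index, (Icc a b ×ℂ Icc c d ∩ ball (𝒞.center j) (𝒞.radius j)).Nonempty →
    𝒞.radius j < 4 * max (b - a) (d - c)

lemma stops_of_not_disjoint {ρ : ℝ} (hρ : ∀ j ∈ 𝒞.index, 4 * ρ ≤ 𝒞.radius j) {a b c d : ℝ}
    (hsize : max (b - a) (d - c) ≤ ρ) (hK : ¬Disjoint (Icc a b ×ℂ Icc c d) K) :
    𝒞.Stops a b c d := by
  obtain ⟨p, hpR, hpK⟩ := not_disjoint_iff.1 hK
  obtain ⟨j, hj, hpj⟩ := mem_iUnion₂.1 (𝒞.subset_iUnion_ball hpK)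
  exact ⟨j, hj, ⟨p, hpR, hpj⟩, by linarith [hρ j hj, 𝒞.radius_pos j hj]⟩

lemma admissible_of_not_stops {a b c d a' b' c' d' : ℝ} (h : ¬𝒞.Stops a b c d)
    (hsub : Icc a' b' ×ℂ Icc c' d' ⊆ Icc a b ×ℂ Icc c d)
    (hs : max (b' - a') (d' - c') = max (b - a) (d - c) / 2) : 𝒞.Admissible a' b' c' d' :=
  fun j hj hmeet => by
    have : ¬max (b - a) (d - c) ≤ 𝒞.radius j / 2 :=
      fun hle => h ⟨j, hj, hmeet.mono (inter_subset_inter_left _ hsub), hle⟩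
    rw [hs]
    linarith

end FiniteBallCover

section Quadrisection

variable {V : Type*} [NormedAddCommGroup V] [NormedSpace ℂ V] [CompleteSpace V]
  {f : ℂ → V} {K : Set ℂ} (𝒞 : FiniteBallCover K) {D : Set ℂ} {δ ε A : ℝ} {a b c d : ℝ}

lemma rectIntegral_eq_zero_of_disjoint (hfK : DifferentiableOn ℂ f Kᶜ) (hab : a ≤ b)
    (hcd : c ≤ d) (hK : Disjoint (Icc a b ×ℂ Icc c d) K) : rectIntegral f a b c d = 0 :=
  rectIntegral_eq_zero_of_differentiableOn
    (hfK.mono (by rw [uIcc_of_le hab, uIcc_of_le hcd]; exact hK.subset_compl_right))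

/-- A rectangle of side `s` meeting `B(cⱼ, rⱼ)` with `rⱼ / 4 < s ≤ rⱼ / 2` lies in `B(cⱼ, 2rⱼ)`,
so its weight is at least its area over `rⱼ`, which controls its perimeter. -/
lemma norm_rectIntegral_le_of_stopped (hf : Continuous f) (hε : 0 ≤ ε)
    (hosc : ∀ x ∈ D, ∀ y ∈ D, dist x y ≤ δ → ‖f x - f y‖ ≤ ε)
    (hrδ : ∀ j ∈ 𝒞.index, 𝒞.radius j ≤ δ) (hab : a < b) (hcd : c < d)
    (hA : max (b - a) (d - c) ^ 2 ≤ A * ((b - a) * (d - c))) (hD : Icc a b ×ℂ Icc c d ⊆ D)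
    {j : ℕ} (hj : j ∈ 𝒞.index)
    (hmeet : (Icc a b ×ℂ Icc c d ∩ ball (𝒞.center j) (𝒞.radius j)).Nonempty)
    (hsmall : max (b - a) (d - c) ≤ 𝒞.radius j / 2)
    (hlarge : 𝒞.radius j < 4 * max (b - a) (d - c)) :
    ‖rectIntegral f a b c d‖ ≤ 16 * A * ε * 𝒞.weight.real (Ioc a b ×ℂ Ioc c d) := by
  obtain ⟨q, hqR, hqB⟩ := hmeet
  set s := max (b - a) (d - c)
  set ν := 𝒞.weight.real (Ioc a b ×ℂ Ioc c d)
  have hW : b - a ≤ s := le_max_left _ _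
  have hH : d - c ≤ s := le_max_right _ _
  have hdist z (hz : z ∈ Icc a b ×ℂ Icc c d) : dist z q ≤ 𝒞.radius j :=
    (dist_le_of_mem_reProdIm_Icc hz hqR).trans (by linarith)
  have hΦ : ‖rectIntegral f a b c d‖ ≤ 2 * ((b - a) + (d - c)) * ε :=
    norm_rectIntegral_le hf hab.le hcd.le (f q) fun z hz =>
      hosc z (hD hz) q (hD hqR) ((hdist z hz).trans (hrδ j hj))
  have hball : Ioc a b ×ℂ Ioc c d ⊆ ball (𝒞.center j) (2 * 𝒞.radius j) := fun z hz =>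
    calc dist z (𝒞.center j) ≤ dist z q + dist q (𝒞.center j) := dist_triangle _ _ _
      _ < 𝒞.radius j + 𝒞.radius j :=
        add_lt_add_of_le_of_lt (hdist z (reProdIm_mono Ioc_subset_Icc_self Ioc_subset_Icc_self hz))
          hqB
      _ = 2 * 𝒞.radius j := by ring
  have harea : (b - a) * (d - c) ≤ 𝒞.radius j * ν := by
    simpa only [volume_real_reProdIm_Ioc hab.le hcd.le] using
      𝒞.volume_real_le_radius_mul_weight hj hball
  have hWH : 0 < (b - a) * (d - c) := mul_pos (sub_pos.2 hab) (sub_pos.2 hcd)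
  have hA0 : 0 ≤ A := by nlinarith
  have hν0 : 0 ≤ ν := measureReal_nonneg
  have hs : s ≤ 4 * (A * ν) := by nlinarith [mul_le_mul_of_nonneg_left harea hA0]
  calc ‖rectIntegral f a b c d‖ ≤ 2 * ((b - a) + (d - c)) * ε := hΦ
    _ ≤ 4 * s * ε := by nlinarith
    _ ≤ 16 * A * ε * ν := by nlinarith

lemma norm_rectIntegral_le_of_terminal (hf : Continuous f) (hfK : DifferentiableOn ℂ f Kᶜ)
    (hε : 0 ≤ ε) (hosc : ∀ x ∈ D, ∀ y ∈ D, dist x y ≤ δ → ‖f x - f y‖ ≤ ε)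
    (hrδ : ∀ j ∈ 𝒞.index, 𝒞.radius j ≤ δ) (hab : a < b) (hcd : c < d)
    (hA : max (b - a) (d - c) ^ 2 ≤ A * ((b - a) * (d - c))) (hD : Icc a b ×ℂ Icc c d ⊆ D)
    (hadm : 𝒞.Admissible a b c d) (hterm : Disjoint (Icc a b ×ℂ Icc c d) K ∨ 𝒞.Stops a b c d) :
    ‖rectIntegral f a b c d‖ ≤ 16 * A * ε * 𝒞.weight.real (Ioc a b ×ℂ Ioc c d) := by
  rcases hterm with hK | ⟨j, hj, hmeet, hsmall⟩
  · rw [rectIntegral_eq_zero_of_disjoint hfK hab.le hcd.le hK, norm_zero]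
    have hA0 : 0 ≤ A := by nlinarith [mul_pos (sub_pos.2 hab) (sub_pos.2 hcd)]
    have : 0 ≤ 𝒞.weight.real (Ioc a b ×ℂ Ioc c d) := measureReal_nonneg
    positivity
  · exact norm_rectIntegral_le_of_stopped 𝒞 hf hε hosc hrδ hab hcd hA hD hj hmeet hsmall
      (hadm j hj hmeet)

/-- Induction on the number `n` of quadrisections after which the pieces have side at most `ρ`,
so that each of them misses `K` or is a piece at which the subdivision stops. -/
theorem norm_rectIntegral_le_mul_weight (hf : Continuous f) (hfK : DifferentiableOn ℂ f Kᶜ)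
    (hε : 0 ≤ ε) (hosc : ∀ x ∈ D, ∀ y ∈ D, dist x y ≤ δ → ‖f x - f y‖ ≤ ε)
    (hrδ : ∀ j ∈ 𝒞.index, 𝒞.radius j ≤ δ) {ρ : ℝ} (hρ : ∀ j ∈ 𝒞.index, 4 * ρ ≤ 𝒞.radius j)
    (n : ℕ) (hab : a < b) (hcd : c < d)
    (hA : max (b - a) (d - c) ^ 2 ≤ A * ((b - a) * (d - c)))
    (hsize : max (b - a) (d - c) ≤ 2 ^ n * ρ) (hD : Icc a b ×ℂ Icc c d ⊆ D)
    (hadm : 𝒞.Admissible a b c d) :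
    ‖rectIntegral f a b c d‖ ≤ 16 * A * ε * 𝒞.weight.real (Ioc a b ×ℂ Ioc c d) := by
  induction n generalizing a b c d with
  | zero =>
    rw [pow_zero, one_mul] at hsize
    exact norm_rectIntegral_le_of_terminal 𝒞 hf hfK hε hosc hrδ hab hcd hA hD hadm
      ((em _).imp_right (𝒞.stops_of_not_disjoint hρ hsize))
  | succ n ih =>
    by_cases hterm : Disjoint (Icc a b ×ℂ Icc c d) K ∨ 𝒞.Stops a b c d
    · exact norm_rectIntegral_le_of_terminal 𝒞 hf hfK hε hosc hrδ hab hcd hA hD hadm hterm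
    have hquarter : ∀ a' b' c' d', a ≤ a' → b' ≤ b → c ≤ c' → d' ≤ d →
        b' - a' = (b - a) / 2 → d' - c' = (d - c) / 2 →
        ‖rectIntegral f a' b' c' d'‖ ≤ 16 * A * ε * 𝒞.weight.real (Ioc a' b' ×ℂ Ioc c' d') := by
      intro a' b' c' d' ha hb hc hd hW hH
      have hsub : Icc a' b' ×ℂ Icc c' d' ⊆ Icc a b ×ℂ Icc c d :=
        reProdIm_mono (Icc_subset_Icc ha hb) (Icc_subset_Icc hc hd)
      have hs : max (b' - a') (d' - c') = max (b - a) (d - c) / 2 := by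
        rw [hW, hH, max_div_div_right zero_le_two]
      refine ih (by linarith) (by linarith) ?_ ?_ (hsub.trans hD)
        (𝒞.admissible_of_not_stops (not_or.1 hterm).2 hsub hs)
      · rw [hs, hW, hH]; linarith
      · rw [hs]; rw [pow_succ] at hsize; linarith
    rw [rectIntegral_quadrisect hf, measureReal_reProdIm_Ioc_quadrisect _ hab.le hcd.le]
    refine norm_add₄_le.trans ?_
    linarith [hquarter a ((a + b) / 2) c ((c + d) / 2) le_rfl (by linarith) le_rfl (by linarith)
        (by ring) (by ring),
      hquarter ((a + b) / 2) b c ((c + d) / 2) (by linarith) le_rfl le_rfl (by linarith)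
        (by ring) (by ring),
      hquarter a ((a + b) / 2) ((c + d) / 2) d le_rfl (by linarith) (by linarith) le_rfl
        (by ring) (by ring),
      hquarter ((a + b) / 2) b ((c + d) / 2) d (by linarith) le_rfl (by linarith) le_rfl
        (by ring) (by ring)]

end Quadrisection

section Removability

variable {V : Type*} [NormedAddCommGroup V] [NormedSpace ℂ V] [CompleteSpace V]
  {f : ℂ → V} {K : Set ℂ}

lemma norm_rectIntegral_le_of_hausdorffMeasure_one_lt (hK : IsCompact K) {M : ℝ}
    (hM : μH[1] K < ENNReal.ofReal M) (hf : Continuous f) (hfK : DifferentiableOn ℂ f Kᶜ)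
    {a b c d A : ℝ} (hab : a < b) (hcd : c < d)
    (hA : max (b - a) (d - c) ^ 2 ≤ A * ((b - a) * (d - c))) {ε : ℝ} (hε : 0 < ε) :
    ‖rectIntegral f a b c d‖ ≤ 16 * A * ε * (4 * π * M) := by
  set s := max (b - a) (d - c)
  have hs : 0 < s := lt_max_of_lt_left (sub_pos.2 hab)
  have hunif : UniformContinuousOn f (Icc a b ×ℂ Icc c d) :=
    (isCompact_Icc.reProdIm isCompact_Icc).uniformContinuousOn_of_continuous hf.continuousOn
  obtain ⟨δ₀, hδ₀, hosc⟩ := Metric.uniformContinuousOn_iff.1 hunif ε hε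
  obtain ⟨𝒞, hrδ, hsum⟩ := exists_finiteBallCover_of_hausdorffMeasure_one_lt hK hM
    (lt_min (half_pos hδ₀) hs)
  obtain ⟨ρ, hρ, hρr⟩ := 𝒞.exists_pos_le_radius
  obtain ⟨n, hn⟩ := pow_unbounded_of_one_lt (s / (ρ / 4)) one_lt_two
  have hA0 : 0 ≤ A := by nlinarith [mul_pos (sub_pos.2 hab) (sub_pos.2 hcd)]
  calc ‖rectIntegral f a b c d‖ ≤ 16 * A * ε * 𝒞.weight.real (Ioc a b ×ℂ Ioc c d) :=
        norm_rectIntegral_le_mul_weight 𝒞 hf hfK hε.le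
          (fun x hx y hy hxy => (dist_eq_norm (f x) (f y) ▸
            hosc x hx y hy (by linarith [min_le_left (δ₀ / 2) s])).le)
          hrδ (ρ := ρ / 4) (fun j hj => by linarith [hρr j hj]) n hab hcd hA
          ((div_lt_iff₀ (by positivity)).1 hn).le subset_rfl
          fun j hj _ => by linarith [hrδ j hj, min_le_right (δ₀ / 2) s]
    _ ≤ 16 * A * ε * (4 * π * M) := by
        gcongr
        exact (𝒞.measureReal_weight_le _).trans (by gcongr)

theorem rectIntegral_eq_zero_of_lt (hK : IsCompact K) (hK1 : μH[1] K < ⊤) (hf : Continuous f)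
    (hfK : DifferentiableOn ℂ f Kᶜ) {a b c d : ℝ} (hab : a < b) (hcd : c < d) :
    rectIntegral f a b c d = 0 := by
  set A := max (b - a) (d - c) ^ 2 / ((b - a) * (d - c))
  set M := (μH[1] K).toReal + 1
  have hA : max (b - a) (d - c) ^ 2 ≤ A * ((b - a) * (d - c)) :=
    (div_mul_cancel₀ _ (mul_pos (sub_pos.2 hab) (sub_pos.2 hcd)).ne').ge
  have hM : μH[1] K < ENNReal.ofReal M := by
    rw [ENNReal.ofReal_add ENNReal.toReal_nonneg zero_le_one, ENNReal.ofReal_toReal hK1.ne,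
      ENNReal.ofReal_one]
    exact ENNReal.lt_add_right hK1.ne one_ne_zero
  set C := 16 * A * (4 * π * M)
  have hC : 0 < C := by
    have : 0 < max (b - a) (d - c) := lt_max_of_lt_left (sub_pos.2 hab)
    positivity
  refine norm_le_zero_iff.1 (le_of_forall_pos_le_add fun η hη => ?_)
  calc ‖rectIntegral f a b c d‖ ≤ 16 * A * (η / C) * (4 * π * M) :=
        norm_rectIntegral_le_of_hausdorffMeasure_one_lt hK hM hf hfK hab hcd hA (div_pos hη hC)
    _ = 0 + η := by rw [zero_add, mul_right_comm, mul_div_cancel₀ η hC.ne']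

theorem rectIntegral_eq_zero_of_hausdorffMeasure_one_lt_top (hK : IsCompact K)
    (hK1 : μH[1] K < ⊤) (hf : Continuous f) (hfK : DifferentiableOn ℂ f Kᶜ) (a b c d : ℝ) :
    rectIntegral f a b c d = 0 := by
  wlog hab : a < b generalizing a b
  · rcases (not_lt.1 hab).eq_or_lt with rfl | hba
    · exact rectIntegral_same_re f _ c d
    · rw [← neg_eq_zero, ← rectIntegral_swap_re]
      exact this b a hba
  wlog hcd : c < d generalizing c d
  · rcases (not_lt.1 hcd).eq_or_lt with rfl | hdc
    · exact rectIntegral_same_im f a b _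
    · rw [← neg_eq_zero, ← rectIntegral_swap_im]
      exact this d c hdc
  exact rectIntegral_eq_zero_of_lt hK hK1 hf hfK hab hcd

theorem differentiable_of_hausdorffMeasure_one_lt_top (hK : IsCompact K) (hK1 : μH[1] K < ⊤)
    (hf : Continuous f) (hfK : DifferentiableOn ℂ f Kᶜ) : Differentiable ℂ f := by
  have hcons : IsConservativeOn f univ := fun z w _ => by
    rw [← add_eq_zero_iff_eq_neg, wedgeIntegral_add_wedgeIntegral_eq]
    exact rectIntegral_eq_zero_of_hausdorffMeasure_one_lt_top hK hK1 hf hfK _ _ _ _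
  exact differentiableOn_univ.1 <|
    (isConservativeOn_and_continuousOn_iff_isDifferentiableOn isOpen_univ).1
      ⟨hcons, hf.continuousOn⟩

end Removability

/-- (Besicovitch) A compact set `E ⊆ ℂ` of finite one-dimensional Hausdorff measure is
`A`-removable. -/
theorem stmt_11 (E : Set ℂ) (hE : IsCompact E) (hfin : μH[1] E < ⊤) :
    ARemovable E := by
  rintro f hf hfE ⟨L, hL⟩ z w
  have hdiff := differentiable_of_hausdorffMeasure_one_lt_top hE hfin hf hfE
  rw [hdiff.apply_eq_of_tendsto_cocompact z hL, hdiff.apply_eq_of_tendsto_cocompact w hL]
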